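/- arXiv:2309.16899 — 4 statements merged into one kernel-verified Lean document; each statement's English description precedes it below -/
import Mathlib

section
/- Let M, N be real symmetric n×n matrices with ‖M‖₂ ≤ 1 and ‖N‖₂ ≤ 1. Let U and V be the subspaces spanned by the eigenvectors of M and N respectively corresponding to eigenvalues ±1. Then ‖MN‖₂ < 1 if and only if U ∩ V = {0}. -/
open Matrix Filter

/-- Euclidean norm of a vector in ℝ^n. -/
noncomputable def vNorm {n : ℕ} (x : Fin n → ℝ) : ℝ := Real.sqrt (∑ i, x i ^ 2)

/-- Operator 2-norm of a matrix (sup of ‖Mx‖₂ over the unit sphere). -/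
noncomputable def mNorm {m n : ℕ} (M : Matrix (Fin m) (Fin n) ℝ) : ℝ :=
  sSup ((fun x => vNorm (M.mulVec x)) '' {x | vNorm x = 1})

/-- Spectral radius of a square real matrix. -/
noncomputable def sRad {n : ℕ} (M : Matrix (Fin n) (Fin n) ℝ) : ℝ :=
  sSup ((fun μ => |μ|) '' spectrum ℝ M)

section Aux

variable {n : ℕ}

lemma vNorm_nonneg (x : Fin n → ℝ) : 0 ≤ vNorm x := Real.sqrt_nonneg _

lemma vNorm_eq_sqrt_dot (x : Fin n → ℝ) : vNorm x = Real.sqrt (x ⬝ᵥ x) := by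
  unfold vNorm; congr 1; simp [dotProduct, sq]

lemma vNorm_sq (x : Fin n → ℝ) : vNorm x ^ 2 = x ⬝ᵥ x := by
  rw [vNorm_eq_sqrt_dot, Real.sq_sqrt]
  simpa [dotProduct, sq] using Finset.sum_nonneg fun i _ => sq_nonneg (x i)

lemma vNorm_zero : vNorm (0 : Fin n → ℝ) = 0 := by simp [vNorm]

lemma vNorm_eq_zero {x : Fin n → ℝ} (h : vNorm x = 0) : x = 0 := by
  have hsum : ∑ i, x i ^ 2 = 0 := by
    have h0 : 0 ≤ ∑ i, x i ^ 2 := Finset.sum_nonneg fun i _ => sq_nonneg _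
    have := Real.sqrt_eq_zero h0 |>.mp h
    exact this
  funext i
  have := (Finset.sum_eq_zero_iff_of_nonneg (fun i _ => sq_nonneg (x i))).mp hsum i
    (Finset.mem_univ i)
  exact pow_eq_zero_iff (by norm_num) |>.mp this

lemma vNorm_smul (c : ℝ) (x : Fin n → ℝ) : vNorm (c • x) = |c| * vNorm x := by
  unfold vNorm
  rw [← Real.sqrt_sq_eq_abs, ← Real.sqrt_mul (sq_nonneg c)]
  congr 1
  rw [Finset.mul_sum]
  exact Finset.sum_congr rfl fun i _ => by simp [mul_pow]

lemma continuous_vNorm : Continuous fun x : Fin n → ℝ => vNorm x := by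
  unfold vNorm
  exact Real.continuous_sqrt.comp (by fun_prop)

lemma isCompact_sphere' : IsCompact {x : Fin n → ℝ | vNorm x = 1} := by
  have hclosed : IsClosed {x : Fin n → ℝ | vNorm x = 1} :=
    isClosed_eq continuous_vNorm continuous_const
  refine (isCompact_closedBall (0 : Fin n → ℝ) 1).of_isClosed_subset hclosed ?_
  intro x hx
  simp only [Set.mem_setOf_eq] at hx
  rw [Metric.mem_closedBall, dist_zero_right]
  refine (pi_norm_le_iff_of_nonneg zero_le_one).mpr fun i => ?_
  have hsum : ∑ j, x j ^ 2 = 1 := by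
    have h0 : 0 ≤ ∑ j, x j ^ 2 := Finset.sum_nonneg fun j _ => sq_nonneg _
    have hx' : Real.sqrt (∑ j, x j ^ 2) = 1 := hx
    rw [← Real.sq_sqrt h0, hx', one_pow]
  have hle : x i ^ 2 ≤ 1 := by
    calc x i ^ 2 ≤ ∑ j, x j ^ 2 :=
          Finset.single_le_sum (fun j _ => sq_nonneg (x j)) (Finset.mem_univ i)
      _ = 1 := hsum
  rw [Real.norm_eq_abs, ← Real.sqrt_one, ← Real.sqrt_sq_eq_abs]
  exact Real.sqrt_le_sqrt hle

lemma continuous_mulVec (A : Matrix (Fin n) (Fin n) ℝ) :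
    Continuous fun x : Fin n → ℝ => A.mulVec x :=
  A.mulVecLin.continuous_of_finiteDimensional

lemma mNorm_bdd (A : Matrix (Fin n) (Fin n) ℝ) :
    BddAbove ((fun x => vNorm (A.mulVec x)) '' {x | vNorm x = 1}) :=
  (isCompact_sphere'.image (continuous_vNorm.comp (continuous_mulVec A))).bddAbove

lemma le_mNorm (A : Matrix (Fin n) (Fin n) ℝ) {x : Fin n → ℝ} (hx : vNorm x = 1) :
    vNorm (A.mulVec x) ≤ mNorm A :=
  le_csSup (mNorm_bdd A) ⟨x, hx, rfl⟩

lemma vNorm_mulVec_le (A : Matrix (Fin n) (Fin n) ℝ) (x : Fin n → ℝ) :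
    vNorm (A.mulVec x) ≤ mNorm A * vNorm x := by
  rcases eq_or_ne (vNorm x) 0 with h | h
  · rw [vNorm_eq_zero h]
    simp [Matrix.mulVec_zero, vNorm_zero]
  · have hpos : 0 < vNorm x := lt_of_le_of_ne (vNorm_nonneg x) (Ne.symm h)
    have hu : vNorm ((vNorm x)⁻¹ • x) = 1 := by
      rw [vNorm_smul, abs_of_pos (inv_pos.mpr hpos), inv_mul_cancel₀ h]
    have hle := le_mNorm A hu
    rw [Matrix.mulVec_smul, vNorm_smul, abs_of_pos (inv_pos.mpr hpos)] at hle
    calc vNorm (A.mulVec x) = vNorm x * ((vNorm x)⁻¹ * vNorm (A.mulVec x)) := by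
          field_simp
      _ ≤ vNorm x * mNorm A := by
          exact mul_le_mul_of_nonneg_left hle hpos.le
      _ = mNorm A * vNorm x := mul_comm _ _

lemma mNorm_lt_one (A : Matrix (Fin n) (Fin n) ℝ)
    (h : ∀ x, vNorm x = 1 → vNorm (A.mulVec x) < 1) : mNorm A < 1 := by
  by_cases hS : ({x : Fin n → ℝ | vNorm x = 1}).Nonempty
  · obtain ⟨x₀, hx₀, hmax⟩ := isCompact_sphere'.exists_isMaxOn hS
      ((continuous_vNorm.comp (continuous_mulVec A)).continuousOn)
    have hle : mNorm A ≤ vNorm (A.mulVec x₀) := by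
      refine csSup_le (hS.image _) ?_
      rintro _ ⟨x, hx, rfl⟩
      exact hmax hx
    exact lt_of_le_of_lt hle (h x₀ hx₀)
  · rw [mNorm, Set.not_nonempty_iff_eq_empty.mp hS, Set.image_empty, Real.sSup_empty]
    norm_num

/-- If `x` is in the span of the `±1` eigenspaces of symmetric `A`, then `A² x = x`,
`‖Ax‖ = ‖x‖`, and `Ax` remains in that span. -/
lemma mem_eigenpair {A : Matrix (Fin n) (Fin n) ℝ} (hA : Aᵀ = A) {x : Fin n → ℝ}
    (hx : x ∈ LinearMap.ker (Matrix.mulVecLin (1 - A)) ⊔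
             LinearMap.ker (Matrix.mulVecLin (1 + A))) :
    A.mulVec (A.mulVec x) = x ∧ vNorm (A.mulVec x) = vNorm x ∧
      A.mulVec x ∈ LinearMap.ker (Matrix.mulVecLin (1 - A)) ⊔
                   LinearMap.ker (Matrix.mulVecLin (1 + A)) := by
  obtain ⟨a, ha, b, hb, rfl⟩ := Submodule.mem_sup.mp hx
  have ha' : A.mulVec a = a := by
    have := LinearMap.mem_ker.mp ha
    rw [Matrix.mulVecLin_apply, Matrix.sub_mulVec, Matrix.one_mulVec, sub_eq_zero] at this
    exact this.symm
  have hb' : A.mulVec b = -b := by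
    have := LinearMap.mem_ker.mp hb
    rw [Matrix.mulVecLin_apply, Matrix.add_mulVec, Matrix.one_mulVec, add_eq_zero_iff_eq_neg]
      at this
    linear_combination (norm := module) this
  have hab : a ⬝ᵥ b = 0 := by
    have h1 : a ⬝ᵥ b = -(a ⬝ᵥ b) := by
      calc a ⬝ᵥ b = (a ᵥ* Aᵀ) ⬝ᵥ b := by rw [Matrix.vecMul_transpose, ha']
        _ = a ⬝ᵥ (Aᵀ.mulVec b) := (Matrix.dotProduct_mulVec a Aᵀ b).symm
        _ = a ⬝ᵥ (A.mulVec b) := by rw [hA]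
        _ = a ⬝ᵥ (-b) := by rw [hb']
        _ = -(a ⬝ᵥ b) := by simp [dotProduct, Finset.sum_neg_distrib]
    linarith
  have hmv : A.mulVec (a + b) = a - b := by
    rw [Matrix.mulVec_add, ha', hb']; abel
  have hsq : (a - b) ⬝ᵥ (a - b) = (a + b) ⬝ᵥ (a + b) := by
    have hba : b ⬝ᵥ a = 0 := by rwa [dotProduct_comm] at hab
    simp only [sub_dotProduct, dotProduct_sub, add_dotProduct,
      dotProduct_add, hab, hba]
    ring
  refine ⟨?_, ?_, ?_⟩
  · rw [hmv, Matrix.mulVec_sub, ha', hb']; abel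
  · rw [hmv, vNorm_eq_sqrt_dot, vNorm_eq_sqrt_dot, hsq]
  · rw [hmv, sub_eq_add_neg]
    exact Submodule.mem_sup.mpr ⟨a, ha, -b, Submodule.neg_mem _ hb, rfl⟩

/-- For symmetric `A` with `‖A‖ ≤ 1`, if `‖Ax‖ = ‖x‖` then `x` lies in the span of
the `±1` eigenspaces. -/
lemma norm_eq_mem {A : Matrix (Fin n) (Fin n) ℝ} (hA : Aᵀ = A) (h1 : mNorm A ≤ 1)
    {x : Fin n → ℝ} (hx : vNorm (A.mulVec x) = vNorm x) :
    x ∈ LinearMap.ker (Matrix.mulVecLin (1 - A)) ⊔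
        LinearMap.ker (Matrix.mulVecLin (1 + A)) := by
  have key : ∀ y : Fin n → ℝ, y ⬝ᵥ ((1 - A * A).mulVec y)
      = vNorm y ^ 2 - vNorm (A.mulVec y) ^ 2 := by
    intro y
    rw [Matrix.sub_mulVec, Matrix.one_mulVec, dotProduct_sub]
    congr 1
    · rw [vNorm_sq]
    · rw [vNorm_sq, ← Matrix.mulVec_mulVec]
      rw [Matrix.dotProduct_mulVec, ← Matrix.mulVec_transpose, hA]
  have hpsd : (1 - A * A).PosSemidef := by
    rw [Matrix.posSemidef_iff_dotProduct_mulVec]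
    constructor
    · show (1 - A * A)ᴴ = 1 - A * A
      rw [Matrix.conjTranspose_eq_transpose_of_trivial, Matrix.transpose_sub,
        Matrix.transpose_one, Matrix.transpose_mul, hA]
    · intro y
      rw [star_trivial, key y]
      have hle : vNorm (A.mulVec y) ≤ vNorm y := by
        calc vNorm (A.mulVec y) ≤ mNorm A * vNorm y := vNorm_mulVec_le A y
          _ ≤ 1 * vNorm y := mul_le_mul_of_nonneg_right h1 (vNorm_nonneg y)
          _ = vNorm y := one_mul _
      have := pow_le_pow_left₀ (vNorm_nonneg _) hle 2
      linarith
  have hz : (1 - A * A).mulVec x = 0 := by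
    refine (hpsd.dotProduct_mulVec_zero_iff x).mp ?_
    rw [star_trivial, key x, hx, sub_self]
  have hAA : A.mulVec (A.mulVec x) = x := by
    rw [Matrix.sub_mulVec, Matrix.one_mulVec, sub_eq_zero] at hz
    rw [Matrix.mulVec_mulVec]
    exact hz.symm
  refine Submodule.mem_sup.mpr
    ⟨(1/2 : ℝ) • (x + A.mulVec x), ?_, (1/2 : ℝ) • (x - A.mulVec x), ?_, by module⟩
  · rw [LinearMap.mem_ker, Matrix.mulVecLin_apply, Matrix.mulVec_smul, Matrix.sub_mulVec,
      Matrix.one_mulVec, Matrix.mulVec_add, hAA]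
    module
  · rw [LinearMap.mem_ker, Matrix.mulVecLin_apply, Matrix.mulVec_smul, Matrix.add_mulVec,
      Matrix.one_mulVec, Matrix.mulVec_sub, hAA]
    module

end Aux

/-- For symmetric `M, N` with `‖M‖₂ ≤ 1`, `‖N‖₂ ≤ 1`, letting `U, V`
be the spans of the `±1`-eigenvectors of `M` resp. `N`, we have
`‖MN‖₂ < 1 ↔ U ∩ V = {0}`. -/
theorem statement1 {n : ℕ} (M N : Matrix (Fin n) (Fin n) ℝ)
    (hM : Mᵀ = M) (hN : Nᵀ = N) (hMnorm : mNorm M ≤ 1) (hNnorm : mNorm N ≤ 1)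
    (U V : Submodule ℝ (Fin n → ℝ))
    (hU : U = LinearMap.ker (Matrix.mulVecLin (1 - M)) ⊔
              LinearMap.ker (Matrix.mulVecLin (1 + M)))
    (hV : V = LinearMap.ker (Matrix.mulVecLin (1 - N)) ⊔
              LinearMap.ker (Matrix.mulVecLin (1 + N))) :
    mNorm (M * N) < 1 ↔ U ⊓ V = ⊥ := by
  subst hU hV
  constructor
  · intro hlt
    rw [eq_bot_iff]
    rintro z ⟨hzU, hzV⟩
    obtain ⟨hN2, hNnormz, _⟩ := mem_eigenpair hN hzV
    obtain ⟨_, hMnormz, _⟩ := mem_eigenpair hM hzU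
    have hval : vNorm ((M * N).mulVec (N.mulVec z)) = vNorm z := by
      rw [← Matrix.mulVec_mulVec, hN2, hMnormz]
    have hle : vNorm z ≤ mNorm (M * N) * vNorm z := by
      calc vNorm z = vNorm ((M * N).mulVec (N.mulVec z)) := hval.symm
        _ ≤ mNorm (M * N) * vNorm (N.mulVec z) := vNorm_mulVec_le _ _
        _ = mNorm (M * N) * vNorm z := by rw [hNnormz]
    have hz0 : vNorm z = 0 := by nlinarith [vNorm_nonneg z]
    simpa [Submodule.mem_bot] using vNorm_eq_zero hz0
  · intro hUV
    apply mNorm_lt_one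
    intro x hx
    by_contra hcon
    push_neg at hcon
    have h1 : vNorm ((M * N).mulVec x) ≤ vNorm (N.mulVec x) := by
      rw [← Matrix.mulVec_mulVec]
      calc vNorm (M.mulVec (N.mulVec x)) ≤ mNorm M * vNorm (N.mulVec x) :=
            vNorm_mulVec_le _ _
        _ ≤ 1 * vNorm (N.mulVec x) :=
            mul_le_mul_of_nonneg_right hMnorm (vNorm_nonneg _)
        _ = vNorm (N.mulVec x) := one_mul _
    have h2 : vNorm (N.mulVec x) ≤ 1 := by
      calc vNorm (N.mulVec x) ≤ mNorm N * vNorm x := vNorm_mulVec_le _ _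
        _ = mNorm N := by rw [hx, mul_one]
        _ ≤ 1 := hNnorm
    have hNx : vNorm (N.mulVec x) = vNorm x := by rw [hx]; linarith
    have hxV := norm_eq_mem hN hNnorm hNx
    have hMNx : vNorm (M.mulVec (N.mulVec x)) = vNorm (N.mulVec x) := by
      rw [Matrix.mulVec_mulVec]
      linarith
    have hNxU := norm_eq_mem hM hMnorm hMNx
    have hNxV := (mem_eigenpair hN hxV).2.2
    have hmem : N.mulVec x ∈
        (LinearMap.ker (Matrix.mulVecLin (1 - M)) ⊔ LinearMap.ker (Matrix.mulVecLin (1 + M))) ⊓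
        (LinearMap.ker (Matrix.mulVecLin (1 - N)) ⊔ LinearMap.ker (Matrix.mulVecLin (1 + N))) :=
      ⟨hNxU, hNxV⟩
    rw [hUV, Submodule.mem_bot] at hmem
    rw [hmem, vNorm_zero, hx] at hNx
    norm_num at hNx
end

section
/- Let W be a symmetric denoiser for which 1 is a simple eigenvalue, and let A be a nonzero diagonal matrix with entries in {0,1} (inpainting mask with at least one observed pixel). Then for every γ ∈ (0,2), the matrix P = W(I − γAᵀA) satisfies ‖P‖₂ < 1. -/
open Matrix Filter

/-- squared-norm of mulVec of symmetric matrix as quadratic form -/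
lemma aux_dot_sq {n : ℕ} (S : Matrix (Fin n) (Fin n) ℝ) (hS : Sᴴ = S) (x : Fin n → ℝ) :
    (S *ᵥ x) ⬝ᵥ (S *ᵥ x) = x ⬝ᵥ (S * S) *ᵥ x := by
  conv_rhs => rw [show S * S = Sᴴ * S from by rw [hS], ← mulVec_mulVec,
    dotProduct_mulVec, vecMul_conjTranspose]
  simp

lemma aux_dot_self_nonneg {n : ℕ} (v : Fin n → ℝ) : 0 ≤ v ⬝ᵥ v :=
  Finset.sum_nonneg fun j _ => mul_self_nonneg (v j)

lemma aux_dot_self_eq_zero {n : ℕ} {v : Fin n → ℝ} (h : v ⬝ᵥ v = 0) : v = 0 := by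
  funext i
  have := Finset.sum_eq_zero_iff_of_nonneg (fun j _ => mul_self_nonneg (v j)) |>.mp h i
    (Finset.mem_univ i)
  exact mul_self_eq_zero.mp this

lemma aux_psd_quad_nonneg {n : ℕ} {M : Matrix (Fin n) (Fin n) ℝ} (hM : M.PosSemidef)
    (x : Fin n → ℝ) : 0 ≤ x ⬝ᵥ M *ᵥ x := by simpa using hM.dotProduct_mulVec_nonneg x

lemma aux_psd_quad_zero {n : ℕ} {M : Matrix (Fin n) (Fin n) ℝ} (hM : M.PosSemidef)
    {x : Fin n → ℝ} (h : x ⬝ᵥ M *ᵥ x = 0) : M *ᵥ x = 0 := by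
  exact (hM.dotProduct_mulVec_zero_iff x).mp (by simpa using h)

/-- I - W is PSD for symmetric nonneg stochastic W -/
lemma aux_one_sub_psd {n : ℕ} (W : Matrix (Fin n) (Fin n) ℝ) (hH : Wᴴ = W)
    (hWnn : ∀ i j, 0 ≤ W i j)
    (hWstoch : W.mulVec (fun _ => 1) = fun _ => 1) :
    (1 - W).PosSemidef := by
  have hsym : ∀ i j, W i j = W j i := by
    intro i j; conv_lhs => rw [← hH]
    simp [conjTranspose_apply]
  have hrow : ∀ i, ∑ j, W i j = 1 := by
    intro i
    have := congrFun hWstoch i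
    simpa [mulVec, dotProduct] using this
  refine Matrix.PosSemidef.of_dotProduct_mulVec_nonneg ?_ ?_
  · exact Matrix.isHermitian_one.sub hH
  · intro x
    simp only [star_trivial, RCLike.re_to_real]
    have key : x ⬝ᵥ (1 - W) *ᵥ x = (1/2) * ∑ i, ∑ j, W i j * (x i - x j)^2 := by
      have expand : ∀ i j, W i j * (x i - x j)^2
          = W i j * x i ^ 2 + W i j * x j ^ 2 - 2 * (x i * (W i j * x j)) := by
        intro i j; ring
      have h1 : ∑ i, ∑ j, W i j * x i ^ 2 = ∑ i, x i ^ 2 := by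
        refine Finset.sum_congr rfl fun i _ => ?_
        rw [← Finset.sum_mul, hrow i, one_mul]
      have h2 : ∑ i, ∑ j, W i j * x j ^ 2 = ∑ i, x i ^ 2 := by
        rw [Finset.sum_comm]
        refine Finset.sum_congr rfl fun j _ => ?_
        calc ∑ i, W i j * x j ^ 2 = (∑ i, W j i) * x j ^ 2 := by
              rw [Finset.sum_mul]; exact Finset.sum_congr rfl fun i _ => by rw [hsym]
          _ = x j ^ 2 := by rw [hrow, one_mul]
      have h3 : x ⬝ᵥ (1 - W) *ᵥ x = ∑ i, x i ^ 2 - ∑ i, ∑ j, x i * (W i j * x j) := by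
        rw [sub_mulVec, one_mulVec, dotProduct_sub]
        congr 1
        · simp [dotProduct, pow_two]
        · simp [dotProduct, mulVec, Finset.mul_sum]
      rw [h3]
      simp only [expand, Finset.sum_sub_distrib, Finset.sum_add_distrib, h1, h2,
        ← Finset.mul_sum]
      ring
    rw [key]
    have : 0 ≤ ∑ i, ∑ j, W i j * (x i - x j)^2 :=
      Finset.sum_nonneg fun i _ => Finset.sum_nonneg fun j _ =>
        mul_nonneg (hWnn i j) (sq_nonneg _)
    linarith

lemma aux_one_sub_sq_psd {n : ℕ} (W : Matrix (Fin n) (Fin n) ℝ)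
    (hWpsd : W.PosSemidef) (h1W : (1 - W).PosSemidef) :
    (1 - W * W).PosSemidef := by
  open scoped MatrixOrder in
  set S := CFC.sqrt W with hSdef
  open scoped MatrixOrder in
  have hs : S * S = W := CFC.sqrt_mul_sqrt_self W hWpsd.nonneg
  open scoped MatrixOrder in
  have hHs : Sᴴ = S := (CFC.sqrt_nonneg W).posSemidef.1
  have hcomm : S * W = W * S := by rw [← hs, ← mul_assoc]
  have key : W * (1 - W) = Sᴴ * (1 - W) * S := by
    rw [hHs]
    have e1 : S * (1 - W) * S = S * S - S * W * S := by noncomm_ring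
    rw [e1, hcomm, hs, mul_assoc, hs]
    noncomm_ring
  have psd2 : (W * (1 - W)).PosSemidef := key ▸ h1W.conjTranspose_mul_mul_same S
  have : ((1 - W) + W * (1 - W)).PosSemidef := h1W.add psd2
  have e2 : (1 - W) + W * (1 - W) = 1 - W * W := by noncomm_ring
  rwa [e2] at this

lemma aux_contract {n : ℕ} (W : Matrix (Fin n) (Fin n) ℝ)
    (hWpsd : W.PosSemidef) (h1W : (1 - W).PosSemidef) (x : Fin n → ℝ) :
    (W *ᵥ x) ⬝ᵥ (W *ᵥ x) ≤ x ⬝ᵥ x ∧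
      ((W *ᵥ x) ⬝ᵥ (W *ᵥ x) = x ⬝ᵥ x → W *ᵥ x = x) := by
  have hpsd2 := aux_one_sub_sq_psd W hWpsd h1W
  have hq : x ⬝ᵥ (1 - W * W) *ᵥ x = x ⬝ᵥ x - (W *ᵥ x) ⬝ᵥ (W *ᵥ x) := by
    rw [aux_dot_sq W hWpsd.1, sub_mulVec, one_mulVec, dotProduct_sub]
  have hge := aux_psd_quad_nonneg hpsd2 x
  constructor
  · linarith [hq ▸ hge]
  · intro heq
    have hz0 : x ⬝ᵥ (1 - W * W) *ᵥ x = 0 := by rw [hq, heq, sub_self]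
    have h1 : (1 - W * W) *ᵥ x = 0 := aux_psd_quad_zero hpsd2 hz0
    have h2 : (W * W) *ᵥ x = x := by
      have := h1
      rw [sub_mulVec, one_mulVec, sub_eq_zero] at this
      exact this.symm
    set z := x - W *ᵥ x with hzdef
    have hWz : W *ᵥ z = -z := by
      rw [hzdef, mulVec_sub, mulVec_mulVec, h2]
      abel
    have hnn := aux_psd_quad_nonneg hWpsd z
    rw [hWz] at hnn
    have : z ⬝ᵥ z ≤ 0 := by
      have : z ⬝ᵥ (-z) = -(z ⬝ᵥ z) := by simp
      linarith [this ▸ hnn]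
    have hz : z = 0 := aux_dot_self_eq_zero (le_antisymm this (aux_dot_self_nonneg z))
    have := sub_eq_zero.mp hz
    exact this.symm

lemma aux_pointwise {n : ℕ} (W A : Matrix (Fin n) (Fin n) ℝ)
    (hWpsd : W.PosSemidef) (hWnn : ∀ i j, 0 ≤ W i j)
    (hWstoch : W.mulVec (fun _ => 1) = fun _ => 1)
    (hWsimple : LinearMap.ker (Matrix.mulVecLin (1 - W)) =
      Submodule.span ℝ {(fun _ => 1 : Fin n → ℝ)})
    (hAdiag : ∀ i j, i ≠ j → A i j = 0)
    (hA01 : ∀ i, A i i = 0 ∨ A i i = 1)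
    (hA0 : A ≠ 0)
    (γ : ℝ) (hγ : γ ∈ Set.Ioo (0 : ℝ) 2)
    (x : Fin n → ℝ) (hx : x ⬝ᵥ x = 1) :
    ((W * (1 - γ • (Aᵀ * A))) *ᵥ x) ⬝ᵥ ((W * (1 - γ • (Aᵀ * A))) *ᵥ x) < 1 := by
  obtain ⟨hγ0, hγ2⟩ := hγ
  have h1W : (1 - W).PosSemidef := aux_one_sub_psd W hWpsd.1 hWnn hWstoch
  -- mask acts diagonally
  have hAv : ∀ (v : Fin n → ℝ) i, (A *ᵥ v) i = A i i * v i := by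
    intro v i
    rw [mulVec, dotProduct, Finset.sum_eq_single i]
    · intro b _ hb; rw [hAdiag i b (Ne.symm hb), zero_mul]
    · intro h; exact absurd (Finset.mem_univ i) h
  have hAtv : ∀ (v : Fin n → ℝ) i, (Aᵀ *ᵥ v) i = A i i * v i := by
    intro v i
    rw [mulVec, dotProduct, Finset.sum_eq_single i]
    · rfl
    · intro b _ hb; rw [transpose_apply, hAdiag b i hb, zero_mul]
    · intro h; exact absurd (Finset.mem_univ i) h
  set B := (1 : Matrix (Fin n) (Fin n) ℝ) - γ • (Aᵀ * A) with hBdef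
  set y := B *ᵥ x with hydef
  have hy : ∀ i, y i = (1 - γ * A i i) * x i := by
    intro i
    have hAAv : ((Aᵀ * A) *ᵥ x) i = A i i * x i := by
      rw [← mulVec_mulVec, hAtv, hAv]
      rcases hA01 i with h | h <;> rw [h] <;> ring
    rw [hydef, hBdef, sub_mulVec, one_mulVec, Pi.sub_apply, smul_mulVec,
      Pi.smul_apply, smul_eq_mul, hAAv]
    ring
  -- find an observed pixel
  obtain ⟨k, hk⟩ : ∃ k, A k k = 1 := by
    by_contra hc
    push_neg at hc
    apply hA0
    ext i j
    rcases eq_or_ne i j with rfl | hij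
    · rcases hA01 i with h | h
      · simpa using h
      · exact absurd h (hc i)
    · simpa using hAdiag i j hij
  have hcon := aux_contract W hWpsd h1W y
  have hPx : (W * B) *ᵥ x = W *ᵥ y := by rw [← mulVec_mulVec, hydef]
  rw [hPx]
  -- compare ‖y‖² with ‖x‖²
  have hterm : ∀ i, y i ^ 2 ≤ x i ^ 2 := by
    intro i
    rw [hy i]
    rcases hA01 i with h | h
    · rw [h]; ring_nf; exact le_refl _
    · rw [h, mul_pow]
      have h1 : (1 - γ * 1) ^ 2 ≤ 1 := by nlinarith
      nlinarith [sq_nonneg (x i)]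
  have hyy : y ⬝ᵥ y = ∑ i, y i ^ 2 := by simp [dotProduct, pow_two]
  have hxx : x ⬝ᵥ x = ∑ i, x i ^ 2 := by simp [dotProduct, pow_two]
  by_cases hobs : ∃ i, A i i = 1 ∧ x i ≠ 0
  · -- some observed coordinate is nonzero: B strictly contracts
    obtain ⟨i, hi1, hix⟩ := hobs
    have hstrict : y ⬝ᵥ y < 1 := by
      rw [hyy, ← hx, hxx]
      refine Finset.sum_lt_sum (fun j _ => hterm j) ⟨i, Finset.mem_univ i, ?_⟩
      rw [hy i, hi1, mul_pow]
      have h2 : (1 - γ * 1) ^ 2 < 1 := by nlinarith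
      have h3 : 0 < x i ^ 2 := by positivity
      nlinarith
    calc (W *ᵥ y) ⬝ᵥ (W *ᵥ y) ≤ y ⬝ᵥ y := hcon.1
      _ < 1 := hstrict
  · -- x vanishes on the mask, so y = x and W strictly contracts
    push_neg at hobs
    have hyx : y = x := by
      funext i
      rcases hA01 i with h | h
      · rw [hy i, h]; ring
      · rw [hy i, h, hobs i h]; ring
    rw [hyx] at hcon ⊢
    rcases lt_or_eq_of_le hcon.1 with h | h
    · rwa [hx] at h
    · exfalso
      have hfix := hcon.2 h
      have hker : x ∈ LinearMap.ker (Matrix.mulVecLin (1 - W)) := by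
        rw [LinearMap.mem_ker, mulVecLin_apply, sub_mulVec, one_mulVec, hfix, sub_self]
      rw [hWsimple, Submodule.mem_span_singleton] at hker
      obtain ⟨c, hc⟩ := hker
      have hxk : x k = 0 := hobs k hk
      have hck : c = 0 := by
        have := congrFun hc k
        simpa [hxk] using this
      have : x = 0 := by rw [← hc, hck, zero_smul]
      rw [this] at hx
      simp at hx

lemma aux_vNorm_def {n : ℕ} (x : Fin n → ℝ) : Real.sqrt (∑ i, x i ^ 2) = Real.sqrt (x ⬝ᵥ x) := by
  congr 1; simp [dotProduct, pow_two]

lemma aux_vNorm_continuous {n : ℕ} :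
    Continuous (fun x : Fin n → ℝ => Real.sqrt (∑ i, x i ^ 2)) :=
  Real.continuous_sqrt.comp (continuous_finset_sum _ fun i _ => (continuous_apply i).pow 2)

lemma aux_main {n : ℕ} (hn : 0 < n) (P : Matrix (Fin n) (Fin n) ℝ)
    (key : ∀ x : Fin n → ℝ, x ⬝ᵥ x = 1 → (P *ᵥ x) ⬝ᵥ (P *ᵥ x) < 1) :
    sSup ((fun x => vNorm (P.mulVec x)) '' {x : Fin n → ℝ | vNorm x = 1}) < 1 := by
  unfold vNorm
  set vN : (Fin n → ℝ) → ℝ := fun x => Real.sqrt (∑ i, x i ^ 2) with hvN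
  set K : Set (Fin n → ℝ) := {x | vN x = 1} with hK
  have hvNc : Continuous vN := aux_vNorm_continuous
  have hKclosed : IsClosed K := isClosed_singleton.preimage hvNc
  have hKbdd : Bornology.IsBounded K := by
    apply (Metric.isBounded_iff_subset_closedBall 0).mpr
    refine ⟨1, fun x hx => ?_⟩
    have hsum : ∑ i, x i ^ 2 = 1 := Real.sqrt_eq_one.mp hx
    rw [Metric.mem_closedBall, dist_zero_right]
    rw [pi_norm_le_iff_of_nonneg zero_le_one]
    intro i
    have h1 : x i ^ 2 ≤ 1 := by
      rw [← hsum]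
      exact Finset.single_le_sum (fun j _ => sq_nonneg (x j)) (Finset.mem_univ i)
    rw [Real.norm_eq_abs]
    nlinarith [abs_nonneg (x i), sq_abs (x i)]
  have hKcompact : IsCompact K := Metric.isCompact_of_isClosed_isBounded hKclosed hKbdd
  have hKne : K.Nonempty := by
    refine ⟨fun i => if i = ⟨0, hn⟩ then 1 else 0, ?_⟩
    show Real.sqrt (∑ i, (fun i => if i = (⟨0, hn⟩ : Fin n) then (1:ℝ) else 0) i ^ 2) = 1
    have : ∑ i, (if i = (⟨0, hn⟩ : Fin n) then (1:ℝ) else 0) ^ 2 = 1 := by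
      rw [Finset.sum_eq_single (⟨0, hn⟩ : Fin n)]
      · simp
      · intro b _ hb; simp [hb]
      · intro h; exact absurd (Finset.mem_univ _) h
    simp only []
    rw [this, Real.sqrt_one]
  set f : (Fin n → ℝ) → ℝ := fun x => vN (P *ᵥ x) with hf
  have hfc : Continuous f := hvNc.comp (Matrix.mulVecLin P).continuous_of_finiteDimensional
  have hSc : IsCompact (f '' K) := hKcompact.image hfc
  have hSne : (f '' K).Nonempty := hKne.image f
  have hmem := hSc.sSup_mem hSne
  obtain ⟨x, hxK, hfx⟩ := hmem
  rw [← hfx]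
  have hx1 : x ⬝ᵥ x = 1 := by
    have : vN x = 1 := hxK
    rw [hvN] at this
    have := Real.sqrt_eq_one.mp this
    rw [← this]; simp [dotProduct, pow_two]
  have := key x hx1
  show Real.sqrt (∑ i, (P *ᵥ x) i ^ 2) < 1
  rw [aux_vNorm_def]
  calc Real.sqrt ((P *ᵥ x) ⬝ᵥ (P *ᵥ x)) < Real.sqrt 1 :=
        Real.sqrt_lt_sqrt (aux_dot_self_nonneg _) this
    _ = 1 := Real.sqrt_one

/-- For a symmetric denoiser `W` with `1` a simple eigenvalue
(so `ker(I−W) = span{e}`) and `A` a nonzero diagonal `{0,1}` inpainting mask,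
for every `γ ∈ (0,2)`, `P = W(I − γAᵀA)` satisfies `‖P‖₂ < 1`. -/
theorem statement3 {n : ℕ} (W A : Matrix (Fin n) (Fin n) ℝ)
    (hWpsd : W.PosSemidef) (hWnn : ∀ i j, 0 ≤ W i j)
    (hWstoch : W.mulVec (fun _ => 1) = fun _ => 1)
    (hWsimple : LinearMap.ker (Matrix.mulVecLin (1 - W)) =
      Submodule.span ℝ {(fun _ => 1 : Fin n → ℝ)})
    (hAdiag : ∀ i j, i ≠ j → A i j = 0)
    (hA01 : ∀ i, A i i = 0 ∨ A i i = 1)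
    (hA0 : A ≠ 0)
    (γ : ℝ) (hγ : γ ∈ Set.Ioo (0 : ℝ) 2) :
    mNorm (W * (1 - γ • (Aᵀ * A))) < 1 := by
  rcases Nat.eq_zero_or_pos n with rfl | hn
  · exact absurd (by ext i j; exact i.elim0) hA0
  · unfold mNorm
    exact aux_main hn _ (fun x hx =>
      aux_pointwise W A hWpsd hWnn hWstoch hWsimple hAdiag hA01 hA0 γ hγ x hx)
end

section
/- Let W = D^{-1}K be a nonsingular kernel denoiser with 1 a simple eigenvalue, A a nonzero diagonal {0,1} matrix, ρ > 0, F = 2(I + ρAᵀA)^{-1} − I, and J = F(2W − I). Then ‖J‖_D = ‖F(2W₀ − I)‖₂ < 1, where W₀ = D^{1/2} W D^{-1/2}; consequently R = ½(I + J) satisfies ‖R‖_D < 1. -/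
open Matrix Filter

lemma stmt10_vNorm_eq {n : ℕ} (x : Fin n → ℝ) :
    vNorm x = ‖(WithLp.equiv 2 (Fin n → ℝ)).symm x‖ := by
  simp [vNorm, EuclideanSpace.norm_eq, Real.norm_eq_abs, sq_abs]

lemma stmt10_sphere_eq {n : ℕ} : {x : Fin n → ℝ | vNorm x = 1} =
    (WithLp.equiv 2 (Fin n → ℝ)) '' Metric.sphere 0 1 := by
  ext x
  rw [Set.mem_image_equiv]
  simp [mem_sphere_zero_iff_norm, stmt10_vNorm_eq]

lemma stmt10_norm_clm_apply {n : ℕ} (M : Matrix (Fin n) (Fin n) ℝ)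
    (x : EuclideanSpace ℝ (Fin n)) :
    ‖Matrix.toEuclideanCLM (𝕜 := ℝ) M x‖
      = vNorm (M.mulVec ((WithLp.equiv 2 (Fin n → ℝ)) x)) := by
  rw [stmt10_vNorm_eq]
  congr 1

lemma stmt10_exists_max_sphere {E F : Type*} [NormedAddCommGroup E] [NormedSpace ℝ E]
    [NormedAddCommGroup F] [NormedSpace ℝ F] [Nontrivial E] [FiniteDimensional ℝ E]
    (f : E →L[ℝ] F) :
    ∃ x₀ : E, ‖x₀‖ = 1 ∧ ‖f x₀‖ = ‖f‖ := by
  obtain ⟨x₀, hx₀, hmax⟩ := (isCompact_sphere (0:E) 1).exists_isMaxOn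
    (NormedSpace.sphere_nonempty.mpr zero_le_one)
    ((continuous_norm.comp f.continuous).continuousOn)
  rw [mem_sphere_zero_iff_norm] at hx₀
  refine ⟨x₀, hx₀, le_antisymm (f.unit_le_opNorm x₀ hx₀.le) ?_⟩
  refine f.opNorm_le_bound (norm_nonneg _) fun x => ?_
  rcases eq_or_ne x 0 with rfl | hx
  · simp
  · have hnx : ‖x‖ ≠ 0 := norm_ne_zero_iff.mpr hx
    have hu : ‖x‖⁻¹ • x ∈ Metric.sphere (0:E) 1 := by
      simp [mem_sphere_zero_iff_norm, norm_smul, inv_mul_cancel₀ hnx,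
        abs_of_nonneg (norm_nonneg x)]
    have h2 : ‖f (‖x‖⁻¹ • x)‖ ≤ ‖f x₀‖ := hmax hu
    rw [f.map_smul, norm_smul, norm_inv, norm_norm] at h2
    have h3 : ‖x‖⁻¹ * ‖f x‖ ≤ ‖f x₀‖ := h2
    calc ‖f x‖ = ‖x‖ * (‖x‖⁻¹ * ‖f x‖) := by field_simp
    _ ≤ ‖x‖ * ‖f x₀‖ := mul_le_mul_of_nonneg_left h3 (norm_nonneg x)
    _ = ‖f x₀‖ * ‖x‖ := mul_comm _ _

lemma stmt10_mNorm_eq_opNorm {n : ℕ} (hn : 0 < n) (M : Matrix (Fin n) (Fin n) ℝ) :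
    mNorm M = ‖Matrix.toEuclideanCLM (𝕜 := ℝ) M‖ := by
  haveI : Nonempty (Fin n) := ⟨⟨0, hn⟩⟩
  haveI : Nontrivial (EuclideanSpace ℝ (Fin n)) := inferInstance
  obtain ⟨x₀, hx₀, hval⟩ := stmt10_exists_max_sphere (Matrix.toEuclideanCLM (𝕜 := ℝ) M)
  rw [mNorm, stmt10_sphere_eq, Set.image_image]
  have hfun : ∀ x : EuclideanSpace ℝ (Fin n),
      vNorm (M.mulVec ((WithLp.equiv 2 (Fin n → ℝ)) x)) =
      ‖Matrix.toEuclideanCLM (𝕜 := ℝ) M x‖ := fun x => (stmt10_norm_clm_apply M x).symm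
  apply IsGreatest.csSup_eq
  constructor
  · exact ⟨x₀, by rwa [mem_sphere_zero_iff_norm], by simp only []; rw [hfun]; exact hval⟩
  · rintro y ⟨x, hx, rfl⟩
    simp only []
    rw [hfun]
    exact (Matrix.toEuclideanCLM (𝕜 := ℝ) M).unit_le_opNorm x
      (by rw [mem_sphere_zero_iff_norm] at hx; exact hx.le)

lemma stmt10_sq_identity {n : ℕ} (W₀ C : Matrix (Fin n) (Fin n) ℝ) (hC : C * C = W₀) :
    (1 : Matrix (Fin n) (Fin n) ℝ) - ((2:ℝ) • W₀ - 1) * ((2:ℝ) • W₀ - 1)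
      = (4:ℝ) • (C * (1 - W₀) * C) := by
  have hCW : C * W₀ = W₀ * C := by rw [← hC, Matrix.mul_assoc, ← Matrix.mul_assoc]
  have expand : C * (1 - W₀) * C = W₀ - W₀ * W₀ := by
    rw [Matrix.mul_sub, Matrix.mul_one, Matrix.sub_mul, hC, hCW, Matrix.mul_assoc, hC]
  rw [expand]
  have hsq : ((2:ℝ) • W₀ - 1) * ((2:ℝ) • W₀ - 1)
      = (4:ℝ) • (W₀ * W₀) - (4:ℝ) • W₀ + 1 := by
    rw [Matrix.sub_mul, Matrix.mul_sub, Matrix.mul_sub, Matrix.one_mul, Matrix.mul_one,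
      smul_mul_assoc, mul_smul_comm, smul_smul]
    norm_num
    module
  rw [hsq]
  module

set_option maxHeartbeats 2000000 in
set_option synthInstance.maxHeartbeats 1000000 in
/-- For a nonsingular kernel denoiser `W = D⁻¹K` with `1` a simple
eigenvalue, a nonzero diagonal `{0,1}` mask `A`, `ρ > 0`,
`F = 2(I + ρAᵀA)⁻¹ − I` and `J = F(2W − I)`, one has
`‖J‖_D = ‖F(2W₀ − I)‖₂ < 1` (where `W₀ = D^{1/2} W D^{-1/2}`); consequently
`R = ½(I + J)` satisfies `‖R‖_D < 1`. -/
theorem statement10 {n : ℕ} (K : Matrix (Fin n) (Fin n) ℝ)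
    (hKpsd : K.PosSemidef) (hKnn : ∀ i j, 0 ≤ K i j)
    (d : Fin n → ℝ) (hd : d = K.mulVec (fun _ => 1)) (hdpos : ∀ i, 0 < d i)
    (W : Matrix (Fin n) (Fin n) ℝ)
    (hW : W = Matrix.diagonal (fun i => (d i)⁻¹) * K)
    (hWinv : IsUnit W.det)
    (hWsimple : LinearMap.ker (Matrix.mulVecLin (1 - W)) =
      Submodule.span ℝ {(fun _ => 1 : Fin n → ℝ)})
    (A : Matrix (Fin n) (Fin n) ℝ)
    (hAdiag : ∀ i j, i ≠ j → A i j = 0) (hA01 : ∀ i, A i i = 0 ∨ A i i = 1)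
    (hA0 : A ≠ 0)
    (ρ : ℝ) (hρ : 0 < ρ)
    (F J W₀ Dh Dhi : Matrix (Fin n) (Fin n) ℝ)
    (hDh : Dh = Matrix.diagonal (fun i => Real.sqrt (d i)))
    (hDhi : Dhi = Matrix.diagonal (fun i => (Real.sqrt (d i))⁻¹))
    (hF : F = (2 : ℝ) • (1 + ρ • (Aᵀ * A))⁻¹ - 1)
    (hJ : J = F * ((2 : ℝ) • W - 1))
    (hW₀ : W₀ = Dh * W * Dhi) :
    mNorm (Dh * J * Dhi) = mNorm (F * ((2 : ℝ) • W₀ - 1)) ∧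
    mNorm (Dh * J * Dhi) < 1 ∧
    mNorm (Dh * ((1/2 : ℝ) • (1 + J)) * Dhi) < 1 := by
  -- n = 0 is impossible
  rcases Nat.eq_zero_or_pos n with hn | hn
  · subst hn
    exact absurd (Subsingleton.elim A 0) hA0
  -- basic facts about d and the diagonal scalings
  have hs : ∀ i, (0:ℝ) < Real.sqrt (d i) := fun i => Real.sqrt_pos.mpr (hdpos i)
  have hsne : ∀ i, Real.sqrt (d i) ≠ 0 := fun i => (hs i).ne'
  have hDhDhi : Dh * Dhi = 1 := by
    rw [hDh, hDhi, Matrix.diagonal_mul_diagonal]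
    have : (fun i => Real.sqrt (d i) * (Real.sqrt (d i))⁻¹) = fun _ : Fin n => (1:ℝ) :=
      funext fun i => mul_inv_cancel₀ (hsne i)
    rw [this, Matrix.diagonal_one]
  have hDhiDh : Dhi * Dh = 1 := by
    rw [hDh, hDhi, Matrix.diagonal_mul_diagonal]
    have : (fun i => (Real.sqrt (d i))⁻¹ * Real.sqrt (d i)) = fun _ : Fin n => (1:ℝ) :=
      funext fun i => inv_mul_cancel₀ (hsne i)
    rw [this, Matrix.diagonal_one]
  -- F is diagonal with entries f
  set f : Fin n → ℝ := fun i => 2 * (1 + ρ * A i i)⁻¹ - 1 with hfdef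
  have hF' : F = Matrix.diagonal f := by
    have hAeq : A = Matrix.diagonal (fun i => A i i) := by
      ext i j
      rcases eq_or_ne i j with rfl | hij
      · simp
      · simp [Matrix.diagonal_apply_ne _ hij, hAdiag i j hij]
    have hB : (1 + ρ • (Aᵀ * A)) = Matrix.diagonal (fun i => 1 + ρ * A i i) := by
      conv_lhs => rw [hAeq]
      rw [Matrix.diagonal_transpose, Matrix.diagonal_mul_diagonal]
      have h11 : ∀ i, A i i * A i i = A i i := fun i => by rcases hA01 i with h | h <;> simp [h]
      ext i j
      rcases eq_or_ne i j with rfl | hij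
      · simp [Matrix.diagonal_apply_eq, Matrix.one_apply_eq, h11]
      · simp [Matrix.diagonal_apply_ne _ hij, Matrix.one_apply_ne hij]
    have hBinv : (1 + ρ • (Aᵀ * A))⁻¹ = Matrix.diagonal (fun i => (1 + ρ * A i i)⁻¹) := by
      apply Matrix.inv_eq_right_inv
      rw [hB, Matrix.diagonal_mul_diagonal]
      have hne : ∀ i, (1 + ρ * A i i) ≠ 0 := by
        intro i
        rcases hA01 i with h | h <;> rw [h] <;> nlinarith
      have he : (fun i => (1 + ρ * A i i) * (1 + ρ * A i i)⁻¹) = fun _ : Fin n => (1:ℝ) :=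
        funext fun i => mul_inv_cancel₀ (hne i)
      rw [he, Matrix.diagonal_one]
    rw [hF, hBinv]
    ext i j
    rcases eq_or_ne i j with rfl | hij
    · simp [Matrix.diagonal_apply_eq, Matrix.one_apply_eq, hfdef]
    · simp [Matrix.diagonal_apply_ne _ hij, Matrix.one_apply_ne hij]
  have hf_sq : ∀ i, f i ^ 2 ≤ 1 := by
    intro i
    rcases hA01 i with h | h <;> simp only [hfdef, h, mul_one, mul_zero]
    · norm_num
    · have h1 : (0:ℝ) < 1 + ρ := by linarith
      have h2 : (1 + ρ)⁻¹ * (1 + ρ) = 1 := inv_mul_cancel₀ h1.ne'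
      have h3 : (0:ℝ) < (1 + ρ)⁻¹ := inv_pos.mpr h1
      nlinarith [mul_pos h3 hρ]
  -- a masked index exists
  obtain ⟨i₀, hi₀⟩ : ∃ i, A i i = 1 := by
    by_contra hcon
    push_neg at hcon
    apply hA0
    ext i j
    rcases eq_or_ne i j with rfl | hij
    · rcases hA01 i with h | h
      · simpa using h
      · exact absurd h (hcon i)
    · simpa using hAdiag i j hij
  have hf_lt : f i₀ ^ 2 < 1 := by
    simp only [hfdef, hi₀, mul_one]
    have h1 : (0:ℝ) < 1 + ρ := by linarith
    have h2 : (1 + ρ)⁻¹ * (1 + ρ) = 1 := inv_mul_cancel₀ h1.ne'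
    have h3 : (0:ℝ) < (1 + ρ)⁻¹ := inv_pos.mpr h1
    nlinarith [mul_pos h3 hρ]
  -- W₀ facts
  have hW₀' : W₀ = Dhi * K * Dhi := by
    rw [hW₀, hW, hDh, hDhi, ← Matrix.mul_assoc, Matrix.diagonal_mul_diagonal]
    have : (fun i => Real.sqrt (d i) * (d i)⁻¹) = fun i => (Real.sqrt (d i))⁻¹ := by
      funext i
      have hm : Real.sqrt (d i) * Real.sqrt (d i) = d i := Real.mul_self_sqrt (hdpos i).le
      have h8 : (d i)⁻¹ = (Real.sqrt (d i))⁻¹ * (Real.sqrt (d i))⁻¹ := by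
        rw [← mul_inv, hm]
      rw [h8, ← mul_assoc, mul_inv_cancel₀ (hsne i), one_mul]
    rw [this]
  have hW₀psd : W₀.PosSemidef := by
    have h2 : Dhiᴴ = Dhi := by rw [hDhi, Matrix.diagonal_conjTranspose]; congr 1
    have := hKpsd.mul_mul_conjTranspose_same Dhi
    rwa [h2, ← hW₀'] at this
  have hIW₀psd : (1 - W₀).PosSemidef := by
    refine Matrix.PosSemidef.of_dotProduct_mulVec_nonneg ?_ ?_
    · exact Matrix.isHermitian_one.sub hW₀psd.1
    · intro x
      set y : Fin n → ℝ := fun i => (Real.sqrt (d i))⁻¹ * x i with hy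
      have hKsym : ∀ i j, K i j = K j i := fun i j => by
        conv_lhs => rw [← hKpsd.1]
        simp [Matrix.conjTranspose_apply]
      have hx : ∀ i, x i = Real.sqrt (d i) * y i := fun i => by
        have := hs i; simp only [hy]; rw [← mul_assoc, mul_inv_cancel₀ (hsne i), one_mul]
      have hdi : ∀ i, d i = ∑ j, K i j := fun i => by
        rw [hd]; simp [Matrix.mulVec, dotProduct]
      have hDx : Dhi *ᵥ x = y := by
        funext i; rw [hDhi, Matrix.mulVec_diagonal]
      have hquad : star x ⬝ᵥ ((1 - W₀) *ᵥ x)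
          = (∑ i, d i * (y i * y i)) - ∑ i, ∑ j, K i j * (y i * y j) := by
        rw [star_trivial, Matrix.sub_mulVec, dotProduct_sub, Matrix.one_mulVec]
        congr 1
        · simp only [dotProduct]
          congr 1; funext i
          rw [hx i]
          have h2 := Real.mul_self_sqrt (hdpos i).le
          nlinarith [h2]
        · rw [hW₀', ← Matrix.mulVec_mulVec, ← Matrix.mulVec_mulVec, hDx]
          have hstep : x ⬝ᵥ Dhi *ᵥ (K *ᵥ y) = y ⬝ᵥ (K *ᵥ y) := by
            simp only [dotProduct]
            congr 1; funext i
            rw [hDhi, Matrix.mulVec_diagonal, hy]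
            ring
          rw [hstep]
          simp only [dotProduct, Matrix.mulVec]
          congr 1; funext i
          rw [Finset.mul_sum]
          congr 1; funext j
          ring
      rw [hquad]
      have key : ∑ i, ∑ j, K i j * (y i - y j)^2
          = 2*(∑ i, d i * (y i * y i)) - 2*(∑ i, ∑ j, K i j * (y i * y j)) := by
        have expand : ∀ i j, K i j * (y i - y j)^2
            = K i j * (y i * y i) + K i j * (y j * y j) - 2 * (K i j * (y i * y j)) := by
          intros; ring
        simp only [expand]
        rw [Finset.sum_congr rfl (fun i _ => Finset.sum_sub_distrib _ _),
          Finset.sum_sub_distrib,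
          Finset.sum_congr rfl (fun i _ => Finset.sum_add_distrib),
          Finset.sum_add_distrib]
        have e1 : ∑ i, ∑ j, K i j * (y i * y i) = ∑ i, d i * (y i * y i) := by
          congr 1; funext i
          rw [← Finset.sum_mul, ← hdi]
        have e2 : ∑ i : Fin n, ∑ j, K i j * (y j * y j) = ∑ i, d i * (y i * y i) := by
          rw [Finset.sum_comm]
          congr 1; funext j
          rw [← Finset.sum_mul]
          congr 1
          rw [hdi j]
          exact Finset.sum_congr rfl fun i _ => (hKsym j i).symm
        have e3 : ∑ i, ∑ j, 2 * (K i j * (y i * y j))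
            = 2 * ∑ i, ∑ j, (K i j * (y i * y j)) := by
          rw [Finset.mul_sum]
          congr 1; funext i
          rw [Finset.mul_sum]
        rw [e1, e2, e3]
        ring
      have pos : 0 ≤ ∑ i, ∑ j, K i j * (y i - y j)^2 :=
        Finset.sum_nonneg fun i _ => Finset.sum_nonneg fun j _ =>
          mul_nonneg (hKnn i j) (sq_nonneg _)
      linarith
  -- the conjugated matrix
  set S : Matrix (Fin n) (Fin n) ℝ := (2:ℝ) • W₀ - 1 with hSdef
  have hM : Dh * J * Dhi = F * S := by
    have hcomm : Dh * F = F * Dh := by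
      rw [hDh, hF', Matrix.diagonal_mul_diagonal, Matrix.diagonal_mul_diagonal]
      have : (fun i => Real.sqrt (d i) * f i) = fun i => f i * Real.sqrt (d i) :=
        funext fun i => mul_comm _ _
      rw [this]
    calc Dh * J * Dhi = (Dh * F) * ((2:ℝ) • W - 1) * Dhi := by
          rw [hJ]; simp only [Matrix.mul_assoc]
    _ = F * (Dh * ((2:ℝ) • W - 1) * Dhi) := by rw [hcomm]; simp only [Matrix.mul_assoc]
    _ = F * S := by
        congr 1
        rw [Matrix.mul_sub, Matrix.sub_mul, Matrix.mul_one, hDhDhi, hSdef, hW₀]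
        congr 1
        rw [mul_smul_comm, smul_mul_assoc]
  -- MAIN INEQUALITY
  have main : mNorm (F * S) < 1 := by
    by_contra hcon
    push_neg at hcon
    haveI : Nonempty (Fin n) := ⟨⟨0, hn⟩⟩
    haveI : Nontrivial (EuclideanSpace ℝ (Fin n)) := inferInstance
    obtain ⟨x₀, hx₀, hval⟩ := stmt10_exists_max_sphere (Matrix.toEuclideanCLM (𝕜 := ℝ) (F * S))
    set v : Fin n → ℝ := (WithLp.equiv 2 (Fin n → ℝ)) x₀ with hv
    have hv1 : ∑ i, v i ^ 2 = 1 := by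
      have hvn : vNorm v = 1 := by
        rw [stmt10_vNorm_eq]
        simpa [hv] using hx₀
      rw [vNorm, Real.sqrt_eq_one] at hvn
      exact hvn
    have hval1 : 1 ≤ ∑ i, (((F * S) *ᵥ v) i) ^ 2 := by
      have he : vNorm ((F * S).mulVec v) = mNorm (F * S) := by
        rw [stmt10_mNorm_eq_opNorm hn, ← hval, stmt10_norm_clm_apply]
      have h2 : 1 ≤ vNorm ((F * S).mulVec v) := by rw [he]; exact hcon
      rw [vNorm] at h2
      have h0 : (0:ℝ) ≤ ∑ i, (((F * S) *ᵥ v) i) ^ 2 :=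
        Finset.sum_nonneg fun i _ => sq_nonneg _
      nlinarith [Real.sq_sqrt h0]
    set w : Fin n → ℝ := S *ᵥ v with hw
    have hFSv : (F * S) *ᵥ v = fun i => f i * w i := by
      rw [← Matrix.mulVec_mulVec, ← hw, hF']
      funext i
      rw [Matrix.mulVec_diagonal]
    rw [hFSv] at hval1
    have hsum1 : ∑ i, (f i * w i) ^ 2 ≤ ∑ i, w i ^ 2 :=
      Finset.sum_le_sum fun i _ => by
        have := hf_sq i
        nlinarith [sq_nonneg (w i)]
    open scoped MatrixOrder in
    set C := CFC.sqrt W₀ with hCdef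
    open scoped MatrixOrder in
    have hCC : C * C = W₀ := CFC.sqrt_mul_sqrt_self W₀ hW₀psd.nonneg
    open scoped MatrixOrder in
    have hCsym : Cᵀ = C := by
      rw [← Matrix.conjTranspose_eq_transpose_of_trivial]
      exact (CFC.sqrt_nonneg W₀).posSemidef.1
    have hW₀sym : W₀ᵀ = W₀ := by
      rw [← Matrix.conjTranspose_eq_transpose_of_trivial]
      exact hW₀psd.1
    have hSsym : Sᵀ = S := by
      rw [hSdef, Matrix.transpose_sub, Matrix.transpose_smul, hW₀sym, Matrix.transpose_one]
    have hIdent' : (1 : Matrix (Fin n) (Fin n) ℝ) - S * S = (4:ℝ) • (C * (1 - W₀) * C) := by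
      rw [hSdef]; exact stmt10_sq_identity W₀ C hCC
    have hdot : ∀ z : Fin n → ℝ, v ⬝ᵥ (C *ᵥ z) = (C *ᵥ v) ⬝ᵥ z := by
      intro z
      rw [Matrix.dotProduct_mulVec, ← Matrix.mulVec_transpose, hCsym]
    have hSv : (S *ᵥ v) ⬝ᵥ (S *ᵥ v) = v ⬝ᵥ ((S * S) *ᵥ v) := by
      conv_rhs => rw [← Matrix.mulVec_mulVec, Matrix.dotProduct_mulVec,
        ← Matrix.mulVec_transpose, hSsym]
    have e0 : v ⬝ᵥ ((1 - S * S) *ᵥ v) = v ⬝ᵥ v - v ⬝ᵥ ((S * S) *ᵥ v) := by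
      rw [Matrix.sub_mulVec, dotProduct_sub, Matrix.one_mulVec]
    have e1 : v ⬝ᵥ ((1 - S * S) *ᵥ v) = 4 * ((C *ᵥ v) ⬝ᵥ ((1 - W₀) *ᵥ (C *ᵥ v))) := by
      rw [hIdent', Matrix.smul_mulVec, dotProduct_smul,
        ← Matrix.mulVec_mulVec, ← Matrix.mulVec_mulVec, hdot]
      simp [smul_eq_mul]
    have hquadpos : 0 ≤ (C *ᵥ v) ⬝ᵥ ((1 - W₀) *ᵥ (C *ᵥ v)) := by
      have h := hIW₀psd.dotProduct_mulVec_nonneg (C *ᵥ v)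
      rwa [star_trivial] at h
    have hdd : ∀ u : Fin n → ℝ, u ⬝ᵥ u = ∑ i, u i ^ 2 := by
      intro u; simp [dotProduct, pow_two]
    have hkey : (∑ i, v i ^ 2) - (∑ i, w i ^ 2)
        = 4 * ((C *ᵥ v) ⬝ᵥ ((1 - W₀) *ᵥ (C *ᵥ v))) := by
      rw [← hdd, ← hdd, hw, hSv, ← e0, e1]
    have hsum2 : ∑ i, w i ^ 2 ≤ ∑ i, v i ^ 2 := by linarith
    have heqw : ∑ i, w i ^ 2 = 1 := le_antisymm (by linarith) (by linarith)
    have hzero : (1 - W₀) *ᵥ (C *ᵥ v) = 0 := by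
      have h0 : (C *ᵥ v) ⬝ᵥ ((1 - W₀) *ᵥ (C *ᵥ v)) = 0 := by linarith
      have hiff := hIW₀psd.dotProduct_mulVec_zero_iff (C *ᵥ v)
      rw [star_trivial] at hiff
      exact hiff.mp h0
    have hW₀Cv : W₀ *ᵥ (C *ᵥ v) = C *ᵥ v := by
      rw [Matrix.sub_mulVec, Matrix.one_mulVec, sub_eq_zero] at hzero
      exact hzero.symm
    have hdetW₀ : W₀.det ≠ 0 := by
      rw [hW₀, Matrix.det_mul, Matrix.det_mul]
      have hDh0 : Dh.det ≠ 0 := by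
        rw [hDh, Matrix.det_diagonal]
        exact Finset.prod_ne_zero_iff.mpr fun i _ => hsne i
      have hDhi0 : Dhi.det ≠ 0 := by
        rw [hDhi, Matrix.det_diagonal]
        exact Finset.prod_ne_zero_iff.mpr fun i _ => inv_ne_zero (hsne i)
      exact mul_ne_zero (mul_ne_zero hDh0 (isUnit_iff_ne_zero.mp hWinv)) hDhi0
    have hdetC : IsUnit C.det := by
      rw [isUnit_iff_ne_zero]
      intro h
      apply hdetW₀
      rw [← hCC, Matrix.det_mul, h, mul_zero]
    have hCinj : Function.Injective (C.mulVec) :=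
      Matrix.mulVec_injective_iff_isUnit.mpr ((Matrix.isUnit_iff_isUnit_det C).mpr hdetC)
    have hW₀v : W₀ *ᵥ v = v := by
      apply hCinj
      have hCW : C * W₀ = W₀ * C := by rw [← hCC, Matrix.mul_assoc, ← Matrix.mul_assoc]
      rw [Matrix.mulVec_mulVec, hCW, ← Matrix.mulVec_mulVec, hW₀Cv]
    have hwv : w = v := by
      rw [hw, hSdef, Matrix.sub_mulVec, Matrix.smul_mulVec, hW₀v, Matrix.one_mulVec]
      funext i
      simp [two_smul]
    have hker : ∃ c : ℝ, ∀ i, v i = Real.sqrt (d i) * c := by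
      set z := Dhi *ᵥ v with hz
      have hWz : (1 - W) *ᵥ z = 0 := by
        have h1 : W₀ *ᵥ v = Dh *ᵥ (W *ᵥ z) := by
          rw [hW₀, ← Matrix.mulVec_mulVec, ← Matrix.mulVec_mulVec]
        have h2 : W *ᵥ z = z := by
          have h3 : Dhi *ᵥ (W₀ *ᵥ v) = z := by rw [hW₀v]
          rw [h1, Matrix.mulVec_mulVec, hDhiDh, Matrix.one_mulVec] at h3
          exact h3
        rw [Matrix.sub_mulVec, Matrix.one_mulVec, h2, sub_self]
      have hmem : z ∈ LinearMap.ker (Matrix.mulVecLin (1 - W)) := by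
        rw [LinearMap.mem_ker, Matrix.mulVecLin_apply]; exact hWz
      rw [hWsimple, Submodule.mem_span_singleton] at hmem
      obtain ⟨c, hcz⟩ := hmem
      refine ⟨c, fun i => ?_⟩
      have hvz : v = Dh *ᵥ z := by
        rw [hz, Matrix.mulVec_mulVec, hDhDhi, Matrix.one_mulVec]
      rw [hvz, ← hcz, hDh, Matrix.mulVec_diagonal]
      simp [mul_comm]
    obtain ⟨c, hc⟩ := hker
    have hsum_eq : ∑ i, (f i * w i) ^ 2 = ∑ i, w i ^ 2 := by linarith
    have hterm : ∀ i ∈ Finset.univ, (w i ^ 2 - (f i * w i) ^ 2) = 0 := by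
      rw [← Finset.sum_eq_zero_iff_of_nonneg]
      · rw [Finset.sum_sub_distrib, hsum_eq, sub_self]
      · intro i _
        have := hf_sq i
        nlinarith [sq_nonneg (w i)]
    have hvi₀ : v i₀ = 0 := by
      have h := hterm i₀ (Finset.mem_univ _)
      rw [hwv] at h
      have h2 : (1 - f i₀ ^ 2) * v i₀ ^ 2 = 0 := by linear_combination h
      rcases mul_eq_zero.mp h2 with h' | h'
      · linarith [hf_lt]
      · exact sq_eq_zero_iff.mp h'
    have hc0 : c = 0 := by
      have h := hc i₀
      rw [hvi₀] at h
      rcases mul_eq_zero.mp h.symm with h' | h'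
      · exact absurd h' (hsne i₀)
      · exact h'
    have hzero' : ∑ i, v i ^ 2 = 0 := by
      apply Finset.sum_eq_zero
      intro i _
      rw [hc i, hc0]
      ring
    linarith
  refine ⟨by rw [hM], by rw [hM]; exact main, ?_⟩
  -- the R part
  have hR : Dh * ((1/2 : ℝ) • (1 + J)) * Dhi = (1/2 : ℝ) • (1 + F * S) := by
    rw [← hM, mul_smul_comm, smul_mul_assoc]
    congr 1
    rw [Matrix.mul_add, Matrix.mul_one, Matrix.add_mul, hDhDhi]
  rw [hR, stmt10_mNorm_eq_opNorm hn]
  have hFS := main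
  rw [stmt10_mNorm_eq_opNorm hn] at hFS
  rw [_root_.map_smul, _root_.map_add, _root_.map_one]
  set X := Matrix.toEuclideanCLM (𝕜 := ℝ) (F * S) with hX
  have h1 : ‖(1 : EuclideanSpace ℝ (Fin n) →L[ℝ] EuclideanSpace ℝ (Fin n))‖ ≤ 1 :=
    ContinuousLinearMap.norm_id_le
  have h2 : ‖1 + X‖ ≤ 1 + ‖X‖ := (norm_add_le _ _).trans (by linarith)
  have h3 := norm_smul_le (1/2 : ℝ) (1 + X)
  have h4 : ‖(1/2 : ℝ)‖ = 1/2 := by rw [Real.norm_eq_abs]; norm_num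
  rw [h4] at h3
  have h5 := mul_le_mul_of_nonneg_left h2 (by norm_num : (0:ℝ) ≤ 1/2)
  linarith
end

section
/- Let W be a symmetric denoiser with 1 a simple eigenvalue and A ∈ ℝ^{m×n} with ρ(AᵀA) ≤ 1 and Ae ≠ 0. Then for any γ ∈ (0,2) and any x₀, b, the PnP-ISTA iterates x_{k+1} = W(x_k − γ(AᵀAx_k − Aᵀb)) converge linearly to the unique fixed point of the iteration map. -/
open Matrix Filter

noncomputable def toE {n : ℕ} (v : Fin n → ℝ) : EuclideanSpace ℝ (Fin n) :=
  (WithLp.equiv 2 _).symm v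

lemma toE_sub {n : ℕ} (a b : Fin n → ℝ) : toE (a - b) = toE a - toE b := rfl
lemma toE_smul {n : ℕ} (c : ℝ) (a : Fin n → ℝ) : toE (c • a) = c • toE a := rfl

lemma vNorm_eq' {n : ℕ} (v : Fin n → ℝ) : vNorm v = ‖toE v‖ := by
  rw [vNorm, EuclideanSpace.norm_eq]
  simp [toE, sq_abs]

lemma norm_eq_repr {n : ℕ} (b : OrthonormalBasis (Fin n) ℝ (EuclideanSpace ℝ (Fin n)))
    (x : EuclideanSpace ℝ (Fin n)) :
    ‖x‖ = Real.sqrt (∑ i, (b.repr x i) ^ 2) := by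
  rw [← b.repr.norm_map x, EuclideanSpace.norm_eq]
  simp [sq_abs]

lemma repr_diag {n : ℕ} {M : Matrix (Fin n) (Fin n) ℝ} (hM : M.IsHermitian)
    (v : Fin n → ℝ) (i : Fin n) :
    hM.eigenvectorBasis.repr (toE (M *ᵥ v)) i =
      hM.eigenvalues i * hM.eigenvectorBasis.repr (toE v) i := by
  rw [OrthonormalBasis.repr_apply_apply, OrthonormalBasis.repr_apply_apply]
  have h1 : ∀ w : Fin n → ℝ, (inner ℝ (hM.eigenvectorBasis i) (toE w) : ℝ)
      = ⇑(hM.eigenvectorBasis i) ⬝ᵥ w := by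
    intro w
    simp [toE, PiLp.inner_apply, RCLike.inner_apply, dotProduct, mul_comm]
  rw [h1, h1, dotProduct_mulVec]
  have ht : Mᵀ = M := by
    rw [← Matrix.conjTranspose_eq_transpose_of_trivial]; exact hM
  have h2 : ⇑(hM.eigenvectorBasis i) ᵥ* M = M *ᵥ ⇑(hM.eigenvectorBasis i) := by
    rw [← Matrix.mulVec_transpose, ht]
  rw [h2, hM.mulVec_eigenvectorBasis, smul_dotProduct, smul_eq_mul]

lemma scaled_norm {n : ℕ} {M : Matrix (Fin n) (Fin n) ℝ} (hM : M.IsHermitian)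
    (s : Fin n → ℝ) (w v : Fin n → ℝ)
    (hw : ∀ i, hM.eigenvectorBasis.repr (toE w) i
        = s i * hM.eigenvectorBasis.repr (toE v) i)
    (hs : ∀ i, s i ^ 2 ≤ 1) :
    ‖toE w‖ ≤ ‖toE v‖ ∧
    (‖toE w‖ = ‖toE v‖ → ∀ i,
      s i ^ 2 * (hM.eigenvectorBasis.repr (toE v) i) ^ 2
        = (hM.eigenvectorBasis.repr (toE v) i) ^ 2) := by
  set b := hM.eigenvectorBasis with hb
  set c : Fin n → ℝ := fun i => b.repr (toE v) i with hc
  have hterm : ∀ i ∈ Finset.univ, (s i) ^ 2 * c i ^ 2 ≤ c i ^ 2 := fun i _ =>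
    mul_le_of_le_one_left (sq_nonneg _) (hs i)
  have h1 : ‖toE w‖ = Real.sqrt (∑ i, s i ^ 2 * c i ^ 2) := by
    rw [norm_eq_repr b]
    congr 1
    refine Finset.sum_congr rfl fun i _ => ?_
    rw [hw i]; ring
  have h2 : ‖toE v‖ = Real.sqrt (∑ i, c i ^ 2) := norm_eq_repr b _
  constructor
  · rw [h1, h2]; exact Real.sqrt_le_sqrt (Finset.sum_le_sum hterm)
  · intro heq
    rw [h1, h2, Real.sqrt_inj (Finset.sum_nonneg fun i _ => by positivity)
      (Finset.sum_nonneg fun i _ => by positivity)] at heq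
    exact fun i => (Finset.sum_eq_sum_iff_of_le hterm).mp heq i (Finset.mem_univ i)

lemma W_contract {n : ℕ} {M : Matrix (Fin n) (Fin n) ℝ} (hM : M.IsHermitian)
    (h0 : ∀ i, 0 ≤ hM.eigenvalues i) (h1 : ∀ i, hM.eigenvalues i ≤ 1) (v : Fin n → ℝ) :
    ‖toE (M *ᵥ v)‖ ≤ ‖toE v‖ ∧ (‖toE (M *ᵥ v)‖ = ‖toE v‖ → M *ᵥ v = v) := by
  obtain ⟨hle, heq⟩ := scaled_norm hM hM.eigenvalues (M *ᵥ v) v (repr_diag hM v)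
    (fun i => by nlinarith [h0 i, h1 i])
  refine ⟨hle, fun h => ?_⟩
  have h2 := heq h
  have key : toE (M *ᵥ v) = toE v := by
    apply hM.eigenvectorBasis.repr.injective
    ext i
    rw [repr_diag hM v i]
    have h3 := h2 i
    set c := hM.eigenvectorBasis.repr (toE v) i with hcdef
    set l := hM.eigenvalues i with hldef
    rcases mul_eq_zero.mp (by nlinarith : c ^ 2 * (1 - l ^ 2) = 0) with hc | hl
    · have hc0 : c = 0 := by nlinarith [sq_nonneg c]
      rw [hc0, mul_zero]
    · have hl1 : l = 1 := by nlinarith [h0 i]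
      rw [hl1, one_mul]
  exact (WithLp.equiv 2 _).symm.injective key

lemma H_contract {n : ℕ} {H : Matrix (Fin n) (Fin n) ℝ} (hH : H.IsHermitian)
    (h0 : ∀ i, 0 ≤ hH.eigenvalues i) (h1 : ∀ i, hH.eigenvalues i ≤ 1)
    {γ : ℝ} (hγ0 : 0 < γ) (hγ2 : γ < 2) (v : Fin n → ℝ) :
    ‖toE (v - γ • (H *ᵥ v))‖ ≤ ‖toE v‖ ∧
      (‖toE (v - γ • (H *ᵥ v))‖ = ‖toE v‖ → H *ᵥ v = 0) := by
  set b := hH.eigenvectorBasis with hb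
  have hw : ∀ i, b.repr (toE (v - γ • (H *ᵥ v))) i
      = (1 - γ * hH.eigenvalues i) * b.repr (toE v) i := by
    intro i
    rw [toE_sub, toE_smul, map_sub, _root_.map_smul]
    have h4 : (b.repr (toE v) - γ • b.repr (toE (H *ᵥ v))) i
        = b.repr (toE v) i - γ * b.repr (toE (H *ᵥ v)) i := rfl
    rw [h4, repr_diag hH v i]; ring
  have hs : ∀ i, (1 - γ * hH.eigenvalues i) ^ 2 ≤ 1 := by
    intro i
    have ha := h0 i; have hbb := h1 i
    have ht0 : 0 ≤ γ * hH.eigenvalues i := mul_nonneg hγ0.le ha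
    have ht2 : γ * hH.eigenvalues i ≤ γ := mul_le_of_le_one_right hγ0.le hbb
    nlinarith
  obtain ⟨hle, heq⟩ := scaled_norm hH _ _ v hw hs
  refine ⟨hle, fun h => ?_⟩
  have h2 := heq h
  have key : toE (H *ᵥ v) = toE (0 : Fin n → ℝ) := by
    apply b.repr.injective
    ext i
    rw [repr_diag hH v i]
    have h3 := h2 i
    set c := b.repr (toE v) i with hcdef
    set μ := hH.eigenvalues i with hμdef
    have hμc : μ * c = 0 := by
      rcases mul_eq_zero.mp (by nlinarith : c ^ 2 * (1 - (1 - γ * μ) ^ 2) = 0) with hc | hl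
      · have hc0 : c = 0 := by nlinarith [sq_nonneg c]
        rw [hc0, mul_zero]
      · have hγμ : γ * μ < 2 := lt_of_le_of_lt (by nlinarith [h0 i, h1 i] : γ * μ ≤ γ) hγ2
        have hz : γ * μ = 0 := by nlinarith
        have hμ0 : μ = 0 := (mul_eq_zero.mp hz).resolve_left hγ0.ne'
        rw [hμ0, zero_mul]
    rw [hμc]
    have : toE (0 : Fin n → ℝ) = (0 : EuclideanSpace ℝ (Fin n)) := rfl
    rw [this, map_zero]
    rfl
  exact (WithLp.equiv 2 _).symm.injective key

lemma eig_le_one_of_sRad {n : ℕ} {M : Matrix (Fin n) (Fin n) ℝ} (hM : M.IsHermitian)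
    (h : sRad M ≤ 1) (i : Fin n) : hM.eigenvalues i ≤ 1 := by
  have hmem : hM.eigenvalues i ∈ spectrum ℝ M := hM.eigenvalues_mem_spectrum_real i
  have habs : |hM.eigenvalues i| ∈ (fun μ => |μ|) '' spectrum ℝ M := ⟨_, hmem, rfl⟩
  have hbdd : BddAbove ((fun μ => |μ|) '' spectrum ℝ M) :=
    ((M.finite_spectrum).image _).bddAbove
  calc hM.eigenvalues i ≤ |hM.eigenvalues i| := le_abs_self _
    _ ≤ sRad M := le_csSup hbdd habs
    _ ≤ 1 := h

lemma W_eig_le_one {n : ℕ} {W : Matrix (Fin n) (Fin n) ℝ} (hW : W.IsHermitian)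
    (hWnn : ∀ i j, 0 ≤ W i j) (hWstoch : W.mulVec (fun _ => 1) = fun _ => 1)
    (i : Fin n) : hW.eigenvalues i ≤ 1 := by
  set v : Fin n → ℝ := ⇑(hW.eigenvectorBasis i) with hv
  have hev : W *ᵥ v = hW.eigenvalues i • v := hW.mulVec_eigenvectorBasis i
  have hn1 : ‖hW.eigenvectorBasis i‖ = 1 := hW.eigenvectorBasis.orthonormal.1 i
  have hvne : v ≠ 0 := by
    intro h
    have h0 : hW.eigenvectorBasis i = 0 := by
      have := congrArg (WithLp.equiv 2 (Fin n → ℝ)).symm h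
      simpa [hv] using this
    rw [h0, norm_zero] at hn1
    norm_num at hn1
  obtain ⟨i₀, -, hmax⟩ := Finset.exists_max_image Finset.univ (fun j => |v j|)
    ⟨i, Finset.mem_univ i⟩
  have hpos : 0 < |v i₀| := by
    obtain ⟨j, hj⟩ := Function.ne_iff.mp hvne
    exact lt_of_lt_of_le (abs_pos.mpr hj) (hmax j (Finset.mem_univ j))
  have hrow : ∑ j, W i₀ j = 1 := by
    have := congrFun hWstoch i₀
    simpa [Matrix.mulVec, dotProduct] using this
  have key : |hW.eigenvalues i| * |v i₀| ≤ 1 * |v i₀| := by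
    have h1 : hW.eigenvalues i * v i₀ = ∑ j, W i₀ j * v j := by
      have := congrFun hev i₀
      simpa [Matrix.mulVec, dotProduct] using this.symm
    calc |hW.eigenvalues i| * |v i₀| = |hW.eigenvalues i * v i₀| := (abs_mul _ _).symm
      _ = |∑ j, W i₀ j * v j| := by rw [h1]
      _ ≤ ∑ j, |W i₀ j * v j| := Finset.abs_sum_le_sum_abs _ _
      _ = ∑ j, W i₀ j * |v j| := Finset.sum_congr rfl fun j _ => by
          rw [abs_mul, abs_of_nonneg (hWnn i₀ j)]
      _ ≤ ∑ j, W i₀ j * |v i₀| := Finset.sum_le_sum fun j _ =>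
          mul_le_mul_of_nonneg_left (hmax j (Finset.mem_univ j)) (hWnn i₀ j)
      _ = (∑ j, W i₀ j) * |v i₀| := (Finset.sum_mul _ _ _).symm
      _ = 1 * |v i₀| := by rw [hrow]
  have habs : |hW.eigenvalues i| ≤ 1 := le_of_mul_le_mul_right (by linarith [key]) hpos
  exact le_trans (le_abs_self _) habs
/-- For a symmetric denoiser `W` with `1` a simple eigenvalue
(`ker(I−W) = span{e}`), `A` with `ρ(AᵀA) ≤ 1` and `Ae ≠ 0`, any `γ ∈ (0,2)`,
any `b` and any initialization, the PnP-ISTA iterates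
`x_{k+1} = W(x_k − γ(AᵀAx_k − Aᵀb))` converge linearly to the unique fixed
point of the iteration map. -/
theorem statement17 {m n : ℕ} (W : Matrix (Fin n) (Fin n) ℝ)
    (A : Matrix (Fin m) (Fin n) ℝ)
    (hWpsd : W.PosSemidef) (hWnn : ∀ i j, 0 ≤ W i j)
    (hWstoch : W.mulVec (fun _ => 1) = fun _ => 1)
    (hWsimple : LinearMap.ker (Matrix.mulVecLin (1 - W)) =
      Submodule.span ℝ {(fun _ => 1 : Fin n → ℝ)})
    (hA : sRad (Aᵀ * A) ≤ 1)
    (hAe : A.mulVec (fun _ => 1) ≠ 0)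
    (γ : ℝ) (hγ : γ ∈ Set.Ioo (0 : ℝ) 2)
    (b : Fin m → ℝ) (x₀ : Fin n → ℝ) (x : ℕ → Fin n → ℝ)
    (hx0 : x 0 = x₀)
    (hrec : ∀ k, x (k + 1) =
      W.mulVec (x k - γ • ((Aᵀ * A).mulVec (x k) - Aᵀ.mulVec b))) :
    ∃ xs : Fin n → ℝ,
      W.mulVec (xs - γ • ((Aᵀ * A).mulVec xs - Aᵀ.mulVec b)) = xs ∧
      (∀ y, W.mulVec (y - γ • ((Aᵀ * A).mulVec y - Aᵀ.mulVec b)) = y → y = xs) ∧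
      Filter.Tendsto x Filter.atTop (nhds xs) ∧
      ∃ c > (0 : ℝ), ∃ θ ∈ Set.Ioo (0 : ℝ) 1, ∀ k, vNorm (x k - xs) ≤ c * θ ^ k := by
  obtain ⟨hγ0, hγ2⟩ := hγ
  have hn : n ≠ 0 := by
    rintro rfl
    exact hAe (funext fun i => by simp [Matrix.mulVec, dotProduct])
  have hWh : W.IsHermitian := hWpsd.1
  set H : Matrix (Fin n) (Fin n) ℝ := Aᵀ * A with hHdef
  have hHpsd : H.PosSemidef := by
    have := Matrix.posSemidef_conjTranspose_mul_self A
    rwa [Matrix.conjTranspose_eq_transpose_of_trivial] at this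
  have hHh : H.IsHermitian := hHpsd.1
  have hHle : ∀ i, hHh.eigenvalues i ≤ 1 := fun i => eig_le_one_of_sRad hHh hA i
  have hH0 : ∀ i, 0 ≤ hHh.eigenvalues i := hHpsd.eigenvalues_nonneg
  have hW0 : ∀ i, 0 ≤ hWh.eigenvalues i := hWpsd.eigenvalues_nonneg
  have hWle : ∀ i, hWh.eigenvalues i ≤ 1 := W_eig_le_one hWh hWnn hWstoch
  set P : Matrix (Fin n) (Fin n) ℝ := W * (1 - γ • H) with hPdef
  have hPmul : ∀ v : Fin n → ℝ, P *ᵥ v = W *ᵥ (v - γ • (H *ᵥ v)) := by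
    intro v
    rw [hPdef, ← Matrix.mulVec_mulVec]
    congr 1
    rw [Matrix.sub_mulVec, Matrix.one_mulVec, Matrix.smul_mulVec]
  -- strict contraction on nonzero vectors
  have hstrict : ∀ v : Fin n → ℝ, v ≠ 0 → ‖toE (P *ᵥ v)‖ < ‖toE v‖ := by
    intro v hv
    obtain ⟨hle1, heq1⟩ := H_contract hHh hH0 hHle hγ0 hγ2 v
    obtain ⟨hle2, heq2⟩ := W_contract hWh hW0 hWle (v - γ • (H *ᵥ v))
    rw [← hPmul v] at hle2 heq2
    rcases lt_or_eq_of_le (hle2.trans hle1) with hlt | heq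
    · exact hlt
    exfalso
    have e1 : ‖toE (v - γ • (H *ᵥ v))‖ = ‖toE v‖ := le_antisymm hle1 (heq ▸ hle2)
    have hHv : H *ᵥ v = 0 := heq1 e1
    have hu : v - γ • (H *ᵥ v) = v := by rw [hHv]; simp
    have hWv : W *ᵥ v = v := by
      have h11 := heq2 (heq.trans e1.symm)
      rw [hu] at h11
      calc W *ᵥ v = W *ᵥ (v - γ • (H *ᵥ v)) := by rw [hu]
        _ = P *ᵥ v := (hPmul v).symm
        _ = v := h11
    -- v ∈ span {1}
    have hker : v ∈ LinearMap.ker (Matrix.mulVecLin (1 - W)) := by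
      rw [LinearMap.mem_ker, Matrix.mulVecLin_apply, Matrix.sub_mulVec,
        Matrix.one_mulVec, hWv, sub_self]
    rw [hWsimple, Submodule.mem_span_singleton] at hker
    obtain ⟨a, ha⟩ := hker
    have hane : a ≠ 0 := by
      rintro rfl
      rw [zero_smul] at ha
      exact hv ha.symm
    -- A v = 0
    have hAv : A *ᵥ v = 0 := by
      have h5 : Aᵀ *ᵥ (A *ᵥ v) = 0 := by
        rw [Matrix.mulVec_mulVec]; exact hHv
      have h6 : (A *ᵥ v) ⬝ᵥ (A *ᵥ v) = 0 := by
        have : v ⬝ᵥ (Aᵀ *ᵥ (A *ᵥ v)) = (A *ᵥ v) ⬝ᵥ (A *ᵥ v) := by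
          rw [Matrix.dotProduct_mulVec, Matrix.vecMul_transpose]
        rw [← this, h5, dotProduct_zero]
      exact dotProduct_self_eq_zero.mp h6
    have hAone : A *ᵥ (fun _ => 1) = 0 := by
      have : A *ᵥ v = a • (A *ᵥ fun _ => 1) := by
        rw [← Matrix.mulVec_smul, ha]
      rw [hAv] at this
      exact (smul_eq_zero.mp this.symm).resolve_left hane
    exact hAe hAone
  -- maximize over the sphere
  haveI : Nonempty (Fin n) := ⟨⟨0, Nat.pos_of_ne_zero hn⟩⟩
  set φ : EuclideanSpace ℝ (Fin n) → ℝ :=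
    fun u => ‖toE (P *ᵥ ((WithLp.equiv 2 (Fin n → ℝ)) u))‖ with hφdef
  have hφcont : Continuous φ := by
    have c1 : Continuous fun u : EuclideanSpace ℝ (Fin n) =>
        toE (P.mulVecLin ((WithLp.equiv 2 (Fin n → ℝ)) u)) :=
      (PiLp.continuous_toLp 2 (fun _ : Fin n => ℝ)).comp
        ((P.mulVecLin.continuous_of_finiteDimensional).comp
          (PiLp.continuous_ofLp 2 (fun _ : Fin n => ℝ)))
    simpa [hφdef, Matrix.mulVecLin_apply] using c1.norm
  have hsne : (Metric.sphere (0 : EuclideanSpace ℝ (Fin n)) 1).Nonempty := by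
    refine ⟨EuclideanSpace.single (Classical.arbitrary (Fin n)) (1 : ℝ), ?_⟩
    simp [EuclideanSpace.norm_single]
  obtain ⟨v₀, hv₀s, hmax⟩ :=
    (isCompact_sphere (0 : EuclideanSpace ℝ (Fin n)) 1).exists_isMaxOn hsne
      hφcont.continuousOn
  have hv₀norm : ‖v₀‖ = 1 := by
    simpa [mem_sphere_iff_norm] using hv₀s
  set θ₀ : ℝ := φ v₀ with hθ₀def
  have hθ₀lt : θ₀ < 1 := by
    have hv₀ne : (WithLp.equiv 2 (Fin n → ℝ)) v₀ ≠ 0 := by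
      intro h
      have : v₀ = 0 := by
        have := congrArg (WithLp.equiv 2 (Fin n → ℝ)).symm h
        simpa using this
      rw [this, norm_zero] at hv₀norm; norm_num at hv₀norm
    have := hstrict _ hv₀ne
    have htoe : toE ((WithLp.equiv 2 (Fin n → ℝ)) v₀) = v₀ :=
      (WithLp.equiv 2 (Fin n → ℝ)).symm_apply_apply v₀
    rw [htoe, hv₀norm] at this
    exact this
  set θ : ℝ := max θ₀ (1/2) with hθdef
  have hθpos : (0 : ℝ) < θ := lt_of_lt_of_le (by norm_num) (le_max_right _ _)
  have hθlt : θ < 1 := max_lt hθ₀lt (by norm_num)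
  have hbound : ∀ v : Fin n → ℝ, ‖toE (P *ᵥ v)‖ ≤ θ * ‖toE v‖ := by
    intro v
    by_cases hv : v = 0
    · subst hv
      simp only [Matrix.mulVec_zero]
      have : toE (0 : Fin n → ℝ) = 0 := rfl
      rw [this, norm_zero, mul_zero]
    · have htne : toE v ≠ 0 := fun h => hv ((WithLp.equiv 2 _).symm.injective h)
      set t : ℝ := ‖toE v‖ with htdef
      have ht : 0 < t := norm_pos_iff.mpr htne
      have hw : toE (t⁻¹ • v) ∈ Metric.sphere (0 : EuclideanSpace ℝ (Fin n)) 1 := by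
        rw [mem_sphere_iff_norm, sub_zero, toE_smul, norm_smul,
          Real.norm_eq_abs, abs_of_pos (inv_pos.mpr ht), ← htdef]
        exact inv_mul_cancel₀ ht.ne'
      have h7 : φ (toE (t⁻¹ • v)) ≤ θ₀ := hmax hw
      have h8 : φ (toE (t⁻¹ • v)) = t⁻¹ * ‖toE (P *ᵥ v)‖ := by
        simp only [hφdef]
        rw [show (WithLp.equiv 2 (Fin n → ℝ)) (toE (t⁻¹ • v)) = t⁻¹ • v from
          (WithLp.equiv 2 (Fin n → ℝ)).apply_symm_apply _,
          Matrix.mulVec_smul, toE_smul, norm_smul, Real.norm_eq_abs,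
          abs_of_pos (inv_pos.mpr ht)]
      rw [h8] at h7
      have h9 : t⁻¹ * ‖toE (P *ᵥ v)‖ ≤ θ := le_trans h7 (le_max_left _ _)
      calc ‖toE (P *ᵥ v)‖ = t * (t⁻¹ * ‖toE (P *ᵥ v)‖) := by
            field_simp
        _ ≤ t * θ := mul_le_mul_of_nonneg_left h9 ht.le
        _ = θ * ‖toE v‖ := by rw [mul_comm]
  -- fixed point existence
  have hker : LinearMap.ker (1 - P).mulVecLin = ⊥ := by
    rw [LinearMap.ker_eq_bot']
    intro z hz
    by_contra hzne
    rw [Matrix.mulVecLin_apply, Matrix.sub_mulVec, Matrix.one_mulVec, sub_eq_zero] at hz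
    have := hstrict z hzne
    rw [← hz] at this
    exact lt_irrefl _ this
  have hsurj : Function.Surjective (1 - P).mulVecLin :=
    LinearMap.surjective_of_injective (LinearMap.ker_eq_bot.mp hker)
  obtain ⟨xs, hxs⟩ := hsurj (W *ᵥ (γ • Aᵀ *ᵥ b))
  have hxs' : xs - P *ᵥ xs = W *ᵥ (γ • Aᵀ *ᵥ b) := by
    rw [← hxs, Matrix.mulVecLin_apply, Matrix.sub_mulVec, Matrix.one_mulVec]
  have hg : ∀ y : Fin n → ℝ, W *ᵥ (y - γ • (H *ᵥ y - Aᵀ *ᵥ b))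
      = P *ᵥ y + W *ᵥ (γ • Aᵀ *ᵥ b) := by
    intro y
    have hy : y - γ • (H *ᵥ y - Aᵀ *ᵥ b) = (y - γ • (H *ᵥ y)) + γ • (Aᵀ *ᵥ b) := by
      rw [smul_sub]; abel
    rw [hy, Matrix.mulVec_add, hPmul]
  have hfix : W *ᵥ (xs - γ • (H *ᵥ xs - Aᵀ *ᵥ b)) = xs := by
    rw [hg, ← hxs']; abel
  refine ⟨xs, hfix, ?_, ?_, ?_⟩
  · intro y hy
    have h10 : P *ᵥ (y - xs) = y - xs := by
      have hyy : P *ᵥ y + W *ᵥ (γ • Aᵀ *ᵥ b) = y := by rw [← hg]; exact hy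
      have hxx : P *ᵥ xs + W *ᵥ (γ • Aᵀ *ᵥ b) = xs := by rw [← hg]; exact hfix
      rw [Matrix.mulVec_sub]
      calc P *ᵥ y - P *ᵥ xs
          = (P *ᵥ y + W *ᵥ (γ • Aᵀ *ᵥ b)) - (P *ᵥ xs + W *ᵥ (γ • Aᵀ *ᵥ b)) := by abel
        _ = y - xs := by rw [hyy, hxx]
    by_contra hne
    have hsub : y - xs ≠ 0 := fun h => hne (sub_eq_zero.mp h)
    have := hstrict _ hsub
    rw [h10] at this
    exact lt_irrefl _ this
  -- convergence
  · have hiter : ∀ k, x (k + 1) - xs = P *ᵥ (x k - xs) := by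
      intro k
      have hxx : P *ᵥ xs + W *ᵥ (γ • Aᵀ *ᵥ b) = xs := by rw [← hg]; exact hfix
      rw [hrec k, hg, Matrix.mulVec_sub]
      calc P *ᵥ x k + W *ᵥ (γ • Aᵀ *ᵥ b) - xs
          = P *ᵥ x k + W *ᵥ (γ • Aᵀ *ᵥ b) - (P *ᵥ xs + W *ᵥ (γ • Aᵀ *ᵥ b)) := by rw [hxx]
        _ = P *ᵥ x k - P *ᵥ xs := by abel
    have hnorm : ∀ k, ‖toE (x k - xs)‖ ≤ θ ^ k * ‖toE (x 0 - xs)‖ := by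
      intro k
      induction k with
      | zero => simp
      | succ k ih =>
        rw [hiter k]
        calc ‖toE (P *ᵥ (x k - xs))‖ ≤ θ * ‖toE (x k - xs)‖ := hbound _
          _ ≤ θ * (θ ^ k * ‖toE (x 0 - xs)‖) := mul_le_mul_of_nonneg_left ih hθpos.le
          _ = θ ^ (k + 1) * ‖toE (x 0 - xs)‖ := by ring
    have hθ0 : Tendsto (fun k : ℕ => θ ^ k * ‖toE (x 0 - xs)‖) atTop (nhds 0) := by
      have := (tendsto_pow_atTop_nhds_zero_of_lt_one hθpos.le hθlt).mul_const
        ‖toE (x 0 - xs)‖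
      simpa using this
    have hE : Tendsto (fun k => toE (x k)) atTop (nhds (toE xs)) := by
      rw [tendsto_iff_norm_sub_tendsto_zero]
      refine squeeze_zero (fun k => norm_nonneg _) (fun k => ?_) hθ0
      rw [← toE_sub]
      exact hnorm k
    have hc : Continuous (WithLp.equiv 2 (Fin n → ℝ)) := PiLp.continuous_ofLp 2 _
    have := (hc.tendsto (toE xs)).comp hE
    exact this
  · -- linear rate
    have hiter : ∀ k, x (k + 1) - xs = P *ᵥ (x k - xs) := by
      intro k
      have hxx : P *ᵥ xs + W *ᵥ (γ • Aᵀ *ᵥ b) = xs := by rw [← hg]; exact hfix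
      rw [hrec k, hg, Matrix.mulVec_sub]
      calc P *ᵥ x k + W *ᵥ (γ • Aᵀ *ᵥ b) - xs
          = P *ᵥ x k + W *ᵥ (γ • Aᵀ *ᵥ b) - (P *ᵥ xs + W *ᵥ (γ • Aᵀ *ᵥ b)) := by rw [hxx]
        _ = P *ᵥ x k - P *ᵥ xs := by abel
    have hnorm : ∀ k, ‖toE (x k - xs)‖ ≤ θ ^ k * ‖toE (x 0 - xs)‖ := by
      intro k
      induction k with
      | zero => simp
      | succ k ih =>
        rw [hiter k]
        calc ‖toE (P *ᵥ (x k - xs))‖ ≤ θ * ‖toE (x k - xs)‖ := hbound _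
          _ ≤ θ * (θ ^ k * ‖toE (x 0 - xs)‖) := mul_le_mul_of_nonneg_left ih hθpos.le
          _ = θ ^ (k + 1) * ‖toE (x 0 - xs)‖ := by ring
    refine ⟨‖toE (x 0 - xs)‖ + 1, by positivity, θ, ⟨hθpos, hθlt⟩, fun k => ?_⟩
    rw [vNorm_eq']
    calc ‖toE (x k - xs)‖ ≤ θ ^ k * ‖toE (x 0 - xs)‖ := hnorm k
      _ ≤ θ ^ k * (‖toE (x 0 - xs)‖ + 1) := by
          have := pow_nonneg hθpos.le k
          nlinarith [norm_nonneg (toE (x 0 - xs))]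
      _ = (‖toE (x 0 - xs)‖ + 1) * θ ^ k := by ring
end
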